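/- Let ρ > 0, σ = ±1, s₁, s₂ ∈ ℂ with Im(s₁) ≠ −σ/(2ρ). Along the family of paths where ξ = x + 2σρt satisfies |ξ| = O(|t|) and W₁ := tη^{−2} − (σρ/3)η stays bounded (η = x − 2σρt, |η| → ∞), the second-order rational solution satisfies u₂(x,t)e^{−2iρ²t−iφ} → ρ[1 − 2iσ/(2σW₁ + 2ρs₁* − iσ)] with error O(|t|^{−1/3}). -/

import Mathlib

open Complex Filter Asymptotics

/-- The second-order rational solution of the defocusing nonlocal NLS equation. -/
noncomputable def u2sol (ρ σ φ : ℝ) (s1 s2 : ℂ) (x t : ℝ) : ℂ :=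
  let ξ' : ℂ := (x : ℂ) + 2 * σ * ρ * t + s1
  let η' : ℂ := (x : ℂ) - 2 * σ * ρ * t - (starRingEnd ℂ) s1
  let S : ℂ := (2 / 3) * ρ ^ 2 * ξ' ^ 3 + 2 * σ * ρ * t + ξ' + s2
  let R : ℂ := -((2 / 3) * ρ ^ 2 * η' ^ 3) + 2 * σ * ρ * t
      - 2 * Complex.I * σ * ρ * η' ^ 2 + η' + (starRingEnd ℂ) s2
  let P : ℂ := 1 - 4 * Complex.I * σ * ρ * R
  let Q : ℂ := 1 - 4 * Complex.I * σ * ρ * S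
  (ρ : ℂ) * Complex.exp (2 * Complex.I * ρ ^ 2 * t + Complex.I * φ) +
    8 * Complex.I * σ * ρ ^ 2 * Complex.exp (2 * Complex.I * ρ ^ 2 * t + Complex.I * φ) *
      (ρ ^ 2 * ξ' ^ 2 * R + ρ ^ 2 * η' ^ 2 * S + 2 * Complex.I * σ * ρ * η' * S - S) /
      (ρ ^ 2 * (ξ' ^ 2 * P + η' ^ 2 * Q + 2 * ξ' * η') +
        2 * ρ * ξ' * (2 * ρ * R + Complex.I * σ) +
        2 * ρ * η' * (2 * ρ * S + Complex.I * σ) - 4 * ρ ^ 2 * R * S - 1)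

/-!
Write `η = x - 2σρt`. On these paths `t = (σρ/3)η³ + W₁η²` with `W₁` bounded, so `t` and
`ξ = x + 2σρt` are both of exact order `η³`, and `S ≍ η⁹`. The cubic terms of
`R + iσρη'²` cancel against `2σρt`, leaving `ρ d η'² + O(η)` with `d = 2σW₁ + 2ρs̄₁ - iσ`,
which is bounded away from `0` because `Im d = -(2ρ Im s₁ + σ) ≠ 0`. Hence the denominator
`D = -4ρ²S(R + iσρη'²) + O(η¹⁰)` of `u₂` is of exact order `η¹¹`, whereas in `4ρdN + D` the
order-`η¹¹` terms cancel. Since `u₂e^{-iθ} - ρ(1 - 2iσ/d) = 2iσρ(4ρdN + D)/(Dd)`, the error is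
`O(η⁻¹) = O(|t|^{-1/3})`.
-/

open Bornology

section PowerScale

variable {α : Type*} {l : Filter α} {e : α → ℝ}

theorem Filter.Tendsto.isBigO_pow_pow_of_le (he : Tendsto e l (cobounded ℝ)) {m n : ℕ}
    (h : m ≤ n) :
    (fun a => e a ^ m) =O[l] fun a => e a ^ n :=
  (isBigO_pow_pow_cobounded_of_le h).comp_tendsto he

theorem Filter.Tendsto.isLittleO_pow_pow_of_lt (he : Tendsto e l (cobounded ℝ)) {m n : ℕ}
    (h : m < n) :
    (fun a => e a ^ m) =o[l] fun a => e a ^ n :=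
  (isLittleO_pow_pow_cobounded_of_lt h).comp_tendsto he

theorem Filter.Tendsto.isBigO_const_pow {E : Type*} [NormedAddCommGroup E]
    (he : Tendsto e l (cobounded ℝ)) (c : E) (n : ℕ) : (fun _ => c) =O[l] fun a => e a ^ n :=
  (isBigO_const_one ℝ c l).trans <|
    (he.isBigO_pow_pow_of_le n.zero_le).congr_left fun a => pow_zero (e a)

theorem Asymptotics.IsBigO.trans_pow_le {E : Type*} [Norm E] {f : α → E} {m n : ℕ}
    (hf : f =O[l] fun a => e a ^ m) (he : Tendsto e l (cobounded ℝ)) (h : m ≤ n) :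
    f =O[l] fun a => e a ^ n :=
  hf.trans (he.isBigO_pow_pow_of_le h)

theorem Asymptotics.IsBigO.mul_pow_add {𝕜 : Type*} [NormedField 𝕜] {f g : α → 𝕜} {m n : ℕ}
    (hf : f =O[l] fun a => e a ^ m) (hg : g =O[l] fun a => e a ^ n) :
    (fun a => f a * g a) =O[l] fun a => e a ^ (m + n) :=
  (hf.mul hg).congr_right fun a => (pow_add (e a) m n).symm

theorem Asymptotics.IsTheta.mul_pow_add {𝕜 : Type*} [NormedField 𝕜] {f g : α → 𝕜} {m n : ℕ}
    (hf : f =Θ[l] fun a => e a ^ m) (hg : g =Θ[l] fun a => e a ^ n) :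
    (fun a => f a * g a) =Θ[l] fun a => e a ^ (m + n) :=
  (hf.mul hg).trans_eventuallyEq <| .of_eq <| funext fun a => (pow_add (e a) m n).symm

theorem Asymptotics.IsBigO.pow_pow_mul {𝕜 : Type*} [NormedField 𝕜] {f : α → 𝕜} {m : ℕ}
    (hf : f =O[l] fun a => e a ^ m) (k : ℕ) :
    (fun a => f a ^ k) =O[l] fun a => e a ^ (m * k) :=
  (hf.pow k).congr_right fun a => (pow_mul (e a) m k).symm

theorem Asymptotics.IsTheta.pow_pow_mul {𝕜 : Type*} [NormedField 𝕜] {f : α → 𝕜} {m : ℕ}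
    (hf : f =Θ[l] fun a => e a ^ m) (k : ℕ) :
    (fun a => f a ^ k) =Θ[l] fun a => e a ^ (m * k) :=
  (hf.pow k).trans_eventuallyEq <| .of_eq <| funext fun a => (pow_mul (e a) m k).symm

theorem Asymptotics.IsTheta.add_isBigO_pow {E : Type*} [NormedAddCommGroup E] {f g : α → E}
    {m n : ℕ} (he : Tendsto e l (cobounded ℝ)) (hf : f =Θ[l] fun a => e a ^ n)
    (hg : g =O[l] fun a => e a ^ m) (h : m < n) :
    (fun a => f a + g a) =Θ[l] fun a => e a ^ n :=
  hf.add_isLittleO (hg.trans_isLittleO (he.isLittleO_pow_pow_of_lt h))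

theorem isTheta_of_eq_mul_sq_add_mul_cube {T W : α → ℝ} {c : ℝ} (hc : c ≠ 0)
    (he : Tendsto e l (cobounded ℝ)) (hW : W =O[l] fun _ => (1 : ℝ))
    (hT : ∀ᶠ a in l, T a = c * e a ^ 3 + W a * e a ^ 2) :
    T =Θ[l] fun a => e a ^ 3 := by
  have hcube : (fun a => c * e a ^ 3) =Θ[l] fun a => e a ^ 3 :=
    (isTheta_const_mul_left hc).2 (isTheta_refl _ _)
  have hsq : (fun a => W a * e a ^ 2) =O[l] fun a => e a ^ 2 :=
    (hW.mul (isBigO_refl _ _)).congr_right fun a => one_mul _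
  exact (EventuallyEq.isTheta hT).trans (hcube.add_isBigO_pow he hsq (by norm_num))

theorem inv_isBigO_abs_rpow_neg_inv {T : α → ℝ} {n : ℕ} (hn : n ≠ 0)
    (h : T =Θ[l] fun a => e a ^ n) :
    (fun a => (e a)⁻¹) =O[l] fun a => |T a| ^ (-(n : ℝ)⁻¹) := by
  have hroot : (fun a => |T a| ^ (n : ℝ)⁻¹) =O[l] fun a => |e a| :=
    ((isBigO_abs_left.2 (isBigO_abs_right.2 h.isBigO)).rpow (by positivity)
      (.of_forall fun a => by positivity)).congr_right fun a => by
        rw [abs_pow, Real.pow_rpow_inv_natCast (abs_nonneg _) hn]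
  have hzero : ∀ᶠ a in l, |T a| ^ (n : ℝ)⁻¹ = 0 → |e a| = 0 := by
    filter_upwards [h.eq_zero_iff] with a ha hT
    rw [Real.rpow_eq_zero (abs_nonneg _) (by positivity), abs_eq_zero] at hT
    exact abs_eq_zero.2 (pow_eq_zero_iff hn |>.1 (ha.1 hT))
  refine ((isBigO_abs_right.2 (isBigO_refl _ _)).congr_right fun a => abs_inv (e a)).trans
    ((hroot.inv_rev hzero).trans_eventuallyEq (.of_forall fun a => ?_))
  exact (Real.rpow_neg (abs_nonneg _) _).symm

end PowerScale

namespace SecondOrderSolution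

noncomputable section

/- The quantities of `u2sol` along a path `x`: `xi'`, `eta'`, `S`, `R` are the paper's
`ξ'`, `η'`, `S`, `R`, `u₂ = ρe^{iθ}(1 + 8iσρ N / D)`, `eta` and `W` are the real `η` and `W₁`,
and `d` is the denominator of the limiting soliton. -/
variable (ρ σ : ℝ) (s1 s2 : ℂ) (x : ℝ → ℝ) (t : ℝ)

def eta : ℝ := x t - 2 * σ * ρ * t

def xi : ℝ := x t + 2 * σ * ρ * t

def W : ℝ := t * (eta ρ σ x t)⁻¹ ^ 2 - (σ * ρ / 3) * eta ρ σ x t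

def xi' : ℂ := (x t : ℂ) + 2 * σ * ρ * t + s1

def eta' : ℂ := (x t : ℂ) - 2 * σ * ρ * t - (starRingEnd ℂ) s1

def S : ℂ := (2 / 3) * ρ ^ 2 * xi' ρ σ s1 x t ^ 3 + 2 * σ * ρ * t + xi' ρ σ s1 x t + s2

def R : ℂ := -((2 / 3) * ρ ^ 2 * eta' ρ σ s1 x t ^ 3) + 2 * σ * ρ * t
    - 2 * I * σ * ρ * eta' ρ σ s1 x t ^ 2 + eta' ρ σ s1 x t + (starRingEnd ℂ) s2

def N : ℂ :=
  ρ ^ 2 * xi' ρ σ s1 x t ^ 2 * R ρ σ s1 s2 x t + ρ ^ 2 * eta' ρ σ s1 x t ^ 2 * S ρ σ s1 s2 x t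
    + 2 * I * σ * ρ * eta' ρ σ s1 x t * S ρ σ s1 s2 x t - S ρ σ s1 s2 x t

def D : ℂ :=
  ρ ^ 2 * (xi' ρ σ s1 x t ^ 2 * (1 - 4 * I * σ * ρ * R ρ σ s1 s2 x t)
      + eta' ρ σ s1 x t ^ 2 * (1 - 4 * I * σ * ρ * S ρ σ s1 s2 x t)
      + 2 * xi' ρ σ s1 x t * eta' ρ σ s1 x t)
    + 2 * ρ * xi' ρ σ s1 x t * (2 * ρ * R ρ σ s1 s2 x t + I * σ)
    + 2 * ρ * eta' ρ σ s1 x t * (2 * ρ * S ρ σ s1 s2 x t + I * σ)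
    - 4 * ρ ^ 2 * R ρ σ s1 s2 x t * S ρ σ s1 s2 x t - 1

def M : ℂ := R ρ σ s1 s2 x t + I * σ * ρ * eta' ρ σ s1 x t ^ 2

def d : ℂ := 2 * σ * (W ρ σ x t : ℂ) + 2 * ρ * (starRingEnd ℂ) s1 - I * σ

end

variable {l : Filter ℝ} {ρ σ : ℝ} {s1 s2 : ℂ} {x : ℝ → ℝ} {t : ℝ}

theorem u2sol_mul_exp_sub_eq (φ : ℝ) (hD : D ρ σ s1 s2 x t ≠ 0) (hd : d ρ σ s1 x t ≠ 0) :
    u2sol ρ σ φ s1 s2 (x t) t * exp (-(2 * I * ρ ^ 2 * t) - I * φ)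
      - ρ * (1 - 2 * I * σ / d ρ σ s1 x t)
      = 2 * I * σ * ρ * (4 * ρ * d ρ σ s1 x t * N ρ σ s1 s2 x t + D ρ σ s1 s2 x t)
        / (D ρ σ s1 s2 x t * d ρ σ s1 x t) := by
  rw [show -(2 * I * ρ ^ 2 * t) - I * φ = -(2 * I * ρ ^ 2 * t + I * φ) by ring, exp_neg]
  change (ρ * exp (2 * I * ρ ^ 2 * t + I * φ) + 8 * I * σ * ρ ^ 2
    * exp (2 * I * ρ ^ 2 * t + I * φ) * N ρ σ s1 s2 x t / D ρ σ s1 s2 x t) * _ - _ = _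
  have := exp_ne_zero (2 * I * ρ ^ 2 * t + I * φ)
  field_simp
  ring

theorem eq_eta_cube_add (h : eta ρ σ x t ≠ 0) :
    t = σ * ρ / 3 * eta ρ σ x t ^ 3 + W ρ σ x t * eta ρ σ x t ^ 2 := by
  simp only [W]
  field_simp
  ring

/-- The cubic terms cancel because `2σρt = (2/3)ρ²η³ + 2σρW₁η²` when `σ² = 1`. -/
theorem M_sub_eq (hσ : σ ^ 2 = 1) (h : eta ρ σ x t ≠ 0) :
    M ρ σ s1 s2 x t - ρ * d ρ σ s1 x t * eta' ρ σ s1 x t ^ 2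
      = (2 * ρ ^ 2 * (starRingEnd ℂ) s1 ^ 2 + 4 * σ * ρ * (starRingEnd ℂ) s1 * W ρ σ x t + 1)
          * eta ρ σ x t
        + (-(4 / 3) * ρ ^ 2 * (starRingEnd ℂ) s1 ^ 3
          - 2 * σ * ρ * (starRingEnd ℂ) s1 ^ 2 * W ρ σ x t - (starRingEnd ℂ) s1
          + (starRingEnd ℂ) s2) := by
  have ht : (t : ℂ) = σ * ρ / 3 * (eta ρ σ x t : ℂ) ^ 3 + W ρ σ x t * (eta ρ σ x t : ℂ) ^ 2 :=
    mod_cast eq_eta_cube_add h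
  have hη : eta' ρ σ s1 x t = eta ρ σ x t - (starRingEnd ℂ) s1 := by
    simp only [eta', eta]; push_cast; ring
  have hσ' : (σ : ℂ) ^ 2 = 1 := by exact_mod_cast hσ
  simp only [M, R, d, hη]
  linear_combination (2 * σ * ρ) * ht + (2 / 3 * ρ ^ 2 * (eta ρ σ x t : ℂ) ^ 3) * hσ'

theorem isTheta_eta' (he : Tendsto (eta ρ σ x) l (cobounded ℝ)) :
    eta' ρ σ s1 x =Θ[l] fun t => eta ρ σ x t ^ 1 := by
  have hη : (fun t => (eta ρ σ x t : ℂ)) =Θ[l] fun t => eta ρ σ x t ^ 1 :=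
    (Complex.isTheta_ofReal _ l).trans_eventuallyEq (.of_forall fun t => (pow_one _).symm)
  refine (EventuallyEq.of_eq (funext fun t => ?_)).trans_isTheta
    (hη.add_isBigO_pow he (he.isBigO_const_pow (-(starRingEnd ℂ) s1) 0) one_pos)
  simp only [eta', eta]; push_cast; ring

theorem isTheta_id_eta_cube (hρ : ρ ≠ 0) (hσ : σ ≠ 0)
    (he : Tendsto (eta ρ σ x) l (cobounded ℝ)) (hW : W ρ σ x =O[l] fun _ => (1 : ℝ)) :
    (fun t : ℝ => t) =Θ[l] fun t => eta ρ σ x t ^ 3 :=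
  isTheta_of_eq_mul_sq_add_mul_cube (by positivity) he hW <|
    (he.eventually_ne_cobounded 0).mono fun _ h => eq_eta_cube_add h

theorem isTheta_xi' (he : Tendsto (eta ρ σ x) l (cobounded ℝ))
    (hξ : xi ρ σ x =Θ[l] fun t => eta ρ σ x t ^ 3) :
    xi' ρ σ s1 x =Θ[l] fun t => eta ρ σ x t ^ 3 := by
  refine (EventuallyEq.of_eq (funext fun t => ?_)).trans_isTheta
    (((Complex.isTheta_ofReal _ l).trans hξ).add_isBigO_pow he (he.isBigO_const_pow s1 0)
      (by norm_num))
  simp only [xi', xi]; push_cast; ring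

theorem isTheta_d (hρ : ρ ≠ 0) (hs1 : s1.im ≠ -σ / (2 * ρ))
    (hW : W ρ σ x =O[l] fun _ => (1 : ℝ)) :
    d ρ σ s1 x =Θ[l] fun _ => (1 : ℝ) := by
  have him : ∀ t, (d ρ σ s1 x t).im = -(2 * ρ * s1.im + σ) := fun t => by
    simp [d]; ring
  have hc : 0 < |2 * ρ * s1.im + σ| := abs_pos.2 fun h => hs1 (by field_simp; linarith)
  constructor
  · refine (((Complex.isTheta_ofReal _ l).isBigO.trans hW).const_mul_left (2 * σ : ℂ) |>.add
      (isBigO_const_one ℝ (2 * ρ * (starRingEnd ℂ) s1 - I * σ) l)).congr_left fun t => ?_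
    simp only [d]; ring
  · refine .of_bound |2 * ρ * s1.im + σ|⁻¹ (.of_forall fun t => ?_)
    rw [norm_one, ← div_eq_inv_mul, le_div_iff₀ hc, one_mul, ← abs_neg, ← him]
    exact abs_im_le_norm _

theorem isTheta_S (hρ : ρ ≠ 0) (he : Tendsto (eta ρ σ x) l (cobounded ℝ))
    (hξ' : xi' ρ σ s1 x =Θ[l] fun t => eta ρ σ x t ^ 3)
    (ht : (fun t : ℝ => t) =O[l] fun t => eta ρ σ x t ^ 3) :
    S ρ σ s1 s2 x =Θ[l] fun t => eta ρ σ x t ^ 9 := by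
  have hcube : (fun t => (2 / 3 * ρ ^ 2 : ℂ) * xi' ρ σ s1 x t ^ 3)
      =Θ[l] fun t => eta ρ σ x t ^ 9 :=
    (isTheta_const_mul_left (by simpa using hρ)).2 (hξ'.pow_pow_mul 3)
  have hrest : (fun t => (2 * σ * ρ : ℂ) * t + xi' ρ σ s1 x t + s2)
      =O[l] fun t => eta ρ σ x t ^ 3 :=
    (((Complex.isTheta_ofReal _ l).isBigO.trans ht).const_mul_left _ |>.add hξ'.isBigO).add
      (he.isBigO_const_pow s2 3)
  refine (EventuallyEq.of_eq (funext fun t => ?_)).trans_isTheta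
    (hcube.add_isBigO_pow he hrest (by norm_num))
  simp only [S]; ring

theorem isBigO_R (he : Tendsto (eta ρ σ x) l (cobounded ℝ))
    (hη' : eta' ρ σ s1 x =O[l] fun t => eta ρ σ x t ^ 1)
    (ht : (fun t : ℝ => t) =O[l] fun t => eta ρ σ x t ^ 3) :
    R ρ σ s1 s2 x =O[l] fun t => eta ρ σ x t ^ 3 := by
  have h3 := (hη'.pow_pow_mul 3).const_mul_left (-(2 / 3 * ρ ^ 2) : ℂ)
  have h2 := ((hη'.pow_pow_mul 2).trans_pow_le (n := 3) he (by norm_num)).const_mul_left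
    (2 * I * σ * ρ)
  have ht' := ((Complex.isTheta_ofReal _ l).isBigO.trans ht).const_mul_left (2 * σ * ρ : ℂ)
  refine ((((h3.add ht').sub h2).add (hη'.trans_pow_le he (by norm_num))).add
    (he.isBigO_const_pow ((starRingEnd ℂ) s2) 3)).congr_left fun t => ?_
  simp only [R]; ring

theorem isBigO_M_sub_d_mul_eta'_sq (hσ : σ ^ 2 = 1) (he : Tendsto (eta ρ σ x) l (cobounded ℝ))
    (hW : W ρ σ x =O[l] fun _ => (1 : ℝ)) :
    (fun t => M ρ σ s1 s2 x t - ρ * d ρ σ s1 x t * eta' ρ σ s1 x t ^ 2)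
      =O[l] fun t => eta ρ σ x t ^ 1 := by
  have hW' := (Complex.isTheta_ofReal (W ρ σ x) l).isBigO.trans hW
  have hcoeff := (isBigO_const_one ℝ (2 * ρ ^ 2 * (starRingEnd ℂ) s1 ^ 2 + 1 : ℂ) l).add
    (hW'.const_mul_left (4 * σ * ρ * (starRingEnd ℂ) s1))
  have hη : (fun t => (eta ρ σ x t : ℂ)) =O[l] fun t => eta ρ σ x t ^ 1 :=
    (Complex.isTheta_ofReal _ l).isBigO.congr_right fun t => (pow_one _).symm
  have hconst := ((isBigO_const_one ℝ (-(4 / 3) * ρ ^ 2 * (starRingEnd ℂ) s1 ^ 3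
    - (starRingEnd ℂ) s1 + (starRingEnd ℂ) s2 : ℂ) l).add
    (hW'.const_mul_left (-(2 * σ * ρ * (starRingEnd ℂ) s1 ^ 2)))).trans
    (he.isBigO_const_pow (1 : ℝ) 1)
  refine EventuallyEq.trans_isBigO ?_
    (((hcoeff.mul hη).congr_right fun t => one_mul _).add hconst)
  filter_upwards [he.eventually_ne_cobounded 0] with t ht
  rw [M_sub_eq hσ ht]; ring

theorem isTheta_M (hρ : ρ ≠ 0) (he : Tendsto (eta ρ σ x) l (cobounded ℝ))
    (hd : d ρ σ s1 x =Θ[l] fun _ => (1 : ℝ))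
    (hη' : eta' ρ σ s1 x =Θ[l] fun t => eta ρ σ x t ^ 1)
    (hMsub : (fun t => M ρ σ s1 s2 x t - ρ * d ρ σ s1 x t * eta' ρ σ s1 x t ^ 2)
      =O[l] fun t => eta ρ σ x t ^ 1) :
    M ρ σ s1 s2 x =Θ[l] fun t => eta ρ σ x t ^ 2 := by
  have hmain : (fun t => ρ * d ρ σ s1 x t * eta' ρ σ s1 x t ^ 2)
      =Θ[l] fun t => eta ρ σ x t ^ 2 :=
    (((isTheta_const_mul_left (by simpa using hρ)).2 hd).mul
      (hη'.pow_pow_mul 2)).trans_eventuallyEq (.of_forall fun t => one_mul _)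
  exact (EventuallyEq.of_eq (funext fun t => (add_sub_cancel _ _).symm)).trans_isTheta
    (hmain.add_isBigO_pow he hMsub (by norm_num))

theorem isBigO_D_add_S_mul_M (he : Tendsto (eta ρ σ x) l (cobounded ℝ))
    (hξ' : xi' ρ σ s1 x =O[l] fun t => eta ρ σ x t ^ 3)
    (hη' : eta' ρ σ s1 x =O[l] fun t => eta ρ σ x t ^ 1)
    (hR : R ρ σ s1 s2 x =O[l] fun t => eta ρ σ x t ^ 3)
    (hS : S ρ σ s1 s2 x =O[l] fun t => eta ρ σ x t ^ 9) :
    (fun t => D ρ σ s1 s2 x t + 4 * ρ ^ 2 * S ρ σ s1 s2 x t * M ρ σ s1 s2 x t)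
      =O[l] fun t => eta ρ σ x t ^ 10 := by
  have hsum := hξ'.add (hη'.trans_pow_le (n := 3) he (by norm_num))
  have h1 := (hsum.mul_pow_add hsum).const_mul_left (ρ ^ 2 : ℂ)
  have h2 := ((hξ'.mul_pow_add hξ').mul_pow_add hR).const_mul_left (4 * I * σ * ρ ^ 3)
  have h3 := (hξ'.mul_pow_add hR).const_mul_left (4 * ρ ^ 2 : ℂ)
  have h4 := hsum.const_mul_left (2 * I * σ * ρ)
  have h5 := (hη'.mul_pow_add hS).const_mul_left (4 * ρ ^ 2 : ℂ)
  refine ((((((h1.trans_pow_le he (by norm_num)).sub (h2.trans_pow_le he (by norm_num))).add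
    (h3.trans_pow_le he (by norm_num))).add (h4.trans_pow_le he (by norm_num))).add h5).sub
    (he.isBigO_const_pow (1 : ℂ) 10)).congr_left fun t => ?_
  simp only [D, M]; ring

theorem isTheta_D (hρ : ρ ≠ 0) (he : Tendsto (eta ρ σ x) l (cobounded ℝ))
    (hS : S ρ σ s1 s2 x =Θ[l] fun t => eta ρ σ x t ^ 9)
    (hM : M ρ σ s1 s2 x =Θ[l] fun t => eta ρ σ x t ^ 2)
    (hrest : (fun t => D ρ σ s1 s2 x t + 4 * ρ ^ 2 * S ρ σ s1 s2 x t * M ρ σ s1 s2 x t)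
      =O[l] fun t => eta ρ σ x t ^ 10) :
    D ρ σ s1 s2 x =Θ[l] fun t => eta ρ σ x t ^ 11 := by
  have hmain : (fun t => -(4 * ρ ^ 2 : ℂ) * (S ρ σ s1 s2 x t * M ρ σ s1 s2 x t))
      =Θ[l] fun t => eta ρ σ x t ^ 11 :=
    (isTheta_const_mul_left (by simpa using hρ)).2 (hS.mul_pow_add hM)
  refine (EventuallyEq.of_eq (funext fun t => ?_)).trans_isTheta
    (hmain.add_isBigO_pow he hrest (by norm_num))
  ring

theorem isBigO_d_mul_N_add_D (he : Tendsto (eta ρ σ x) l (cobounded ℝ))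
    (hd : d ρ σ s1 x =O[l] fun _ => (1 : ℝ))
    (hξ' : xi' ρ σ s1 x =O[l] fun t => eta ρ σ x t ^ 3)
    (hη' : eta' ρ σ s1 x =O[l] fun t => eta ρ σ x t ^ 1)
    (hR : R ρ σ s1 s2 x =O[l] fun t => eta ρ σ x t ^ 3)
    (hS : S ρ σ s1 s2 x =O[l] fun t => eta ρ σ x t ^ 9)
    (hMsub : (fun t => M ρ σ s1 s2 x t - ρ * d ρ σ s1 x t * eta' ρ σ s1 x t ^ 2)
      =O[l] fun t => eta ρ σ x t ^ 1)
    (hrest : (fun t => D ρ σ s1 s2 x t + 4 * ρ ^ 2 * S ρ σ s1 s2 x t * M ρ σ s1 s2 x t)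
      =O[l] fun t => eta ρ σ x t ^ 10) :
    (fun t => 4 * ρ * d ρ σ s1 x t * N ρ σ s1 s2 x t + D ρ σ s1 s2 x t)
      =O[l] fun t => eta ρ σ x t ^ 10 := by
  have hd' : d ρ σ s1 x =O[l] fun t => eta ρ σ x t ^ 0 := hd.trans (he.isBigO_const_pow 1 0)
  -- the order-`η¹¹` term `4ρ³dη'²S` of `4ρdN` cancels against the `-4ρ²SM` in `D`
  have h1 := (((hd'.mul_pow_add hξ').mul_pow_add hξ').mul_pow_add hR).const_mul_left
    (4 * ρ ^ 3 : ℂ)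
  have h2 := ((hd'.mul_pow_add hη').mul_pow_add hS).const_mul_left (8 * I * σ * ρ ^ 2)
  have h3 := (hd'.mul_pow_add hS).const_mul_left (4 * ρ : ℂ)
  have h4 := (hS.mul_pow_add hMsub).const_mul_left (4 * ρ ^ 2 : ℂ)
  refine (((((h1.trans_pow_le he (by norm_num)).add h2).sub
    (h3.trans_pow_le he (by norm_num))).sub h4).add hrest).congr_left fun t => ?_
  simp only [N, M]; ring

theorem isBigO_u2sol_mul_exp_sub (φ : ℝ) (he : Tendsto (eta ρ σ x) l (cobounded ℝ))
    (hD : D ρ σ s1 s2 x =Θ[l] fun t => eta ρ σ x t ^ 11)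
    (hd : d ρ σ s1 x =Θ[l] fun _ => (1 : ℝ))
    (hG : (fun t => 4 * ρ * d ρ σ s1 x t * N ρ σ s1 s2 x t + D ρ σ s1 s2 x t)
      =O[l] fun t => eta ρ σ x t ^ 10) :
    (fun t => u2sol ρ σ φ s1 s2 (x t) t * exp (-(2 * I * ρ ^ 2 * t) - I * φ)
      - ρ * (1 - 2 * I * σ / d ρ σ s1 x t)) =O[l] fun t => (eta ρ σ x t)⁻¹ := by
  have hne := he.eventually_ne_cobounded 0
  have hDne : ∀ᶠ t in l, D ρ σ s1 s2 x t ≠ 0 := by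
    filter_upwards [hD.eq_zero_iff, hne] with t h ht
    exact fun h0 => ht (pow_eq_zero_iff (by norm_num) |>.1 (h.1 h0))
  have hdne : ∀ᶠ t in l, d ρ σ s1 x t ≠ 0 := by
    filter_upwards [hd.eq_zero_iff] with t h
    exact fun h0 => one_ne_zero (h.1 h0)
  have hpow : (fun t => eta ρ σ x t ^ 10 * (eta ρ σ x t ^ 11 * 1)⁻¹)
      =ᶠ[l] fun t => (eta ρ σ x t)⁻¹ := by
    filter_upwards [hne] with t ht
    field_simp
  refine EventuallyEq.trans_isBigO ?_
    (((hG.mul (hD.mul hd).inv.isBigO).const_mul_left (2 * I * σ * ρ)).trans_eventuallyEq hpow)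
  filter_upwards [hDne, hdne] with t hDt hdt
  rw [u2sol_mul_exp_sub_eq φ hDt hdt]
  ring

end SecondOrderSolution

open SecondOrderSolution in
/-- Along paths where `ξ = x + 2σρt` is of order `|t|`, `|η| → ∞` and
`W₁ = tη^{−2} − (σρ/3)η` stays bounded, the second-order rational solution tends to the
first curved asymptotic soliton `ρ[1 − 2iσ/(2σW₁ + 2ρs₁* − iσ)]` (after removing the
phase), with error `O(|t|^{−1/3})`. -/
theorem second_order_first_asymptotic_soliton (ρ σ φ : ℝ) (hρ : 0 < ρ)
    (hσ : σ = 1 ∨ σ = -1) (s1 s2 : ℂ) (hs1 : s1.im ≠ -σ / (2 * ρ)) (x : ℝ → ℝ)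
    (hξO : (fun t : ℝ => x t + 2 * σ * ρ * t) =O[Filter.cocompact ℝ] (fun t : ℝ => t))
    (hOξ : (fun t : ℝ => t) =O[Filter.cocompact ℝ] (fun t : ℝ => x t + 2 * σ * ρ * t))
    (hη : Filter.Tendsto (fun t : ℝ => |x t - 2 * σ * ρ * t|) (Filter.cocompact ℝ)
      Filter.atTop)
    (hW : (fun t : ℝ => t * (x t - 2 * σ * ρ * t)⁻¹ ^ 2
        - (σ * ρ / 3) * (x t - 2 * σ * ρ * t))
      =O[Filter.cocompact ℝ] (fun _ : ℝ => (1 : ℝ))) :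
    (fun t : ℝ => u2sol ρ σ φ s1 s2 (x t) t *
        Complex.exp (-(2 * Complex.I * ρ ^ 2 * t) - Complex.I * φ)
      - (ρ : ℂ) * (1 - 2 * Complex.I * σ /
          (2 * σ * ((t * (x t - 2 * σ * ρ * t)⁻¹ ^ 2
              - (σ * ρ / 3) * (x t - 2 * σ * ρ * t) : ℝ) : ℂ)
            + 2 * ρ * (starRingEnd ℂ) s1 - Complex.I * σ)))
      =O[Filter.cocompact ℝ] (fun t : ℝ => |t| ^ (-(1 : ℝ) / 3)) := by
  have he : Tendsto (eta ρ σ x) (cocompact ℝ) (cobounded ℝ) :=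
    tendsto_norm_atTop_iff_cobounded.1 hη
  have hσ2 : σ ^ 2 = 1 := by rcases hσ with rfl | rfl <;> norm_num
  have ht := isTheta_id_eta_cube hρ.ne' (by rintro rfl; norm_num at hσ2) he hW
  have hξ : xi ρ σ x =Θ[cocompact ℝ] fun t => t := ⟨hξO, hOξ⟩
  have hξ' := isTheta_xi' (s1 := s1) he (hξ.trans ht)
  have hη' := isTheta_eta' (s1 := s1) he
  have hd := isTheta_d hρ.ne' hs1 hW
  have hS := isTheta_S (s2 := s2) hρ.ne' he hξ' ht.isBigO
  have hR := isBigO_R (s2 := s2) he hη'.isBigO ht.isBigO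
  have hMsub := isBigO_M_sub_d_mul_eta'_sq (s1 := s1) (s2 := s2) hσ2 he hW
  have hrest := isBigO_D_add_S_mul_M he hξ'.isBigO hη'.isBigO hR hS.isBigO
  have hD := isTheta_D hρ.ne' he hS (isTheta_M hρ.ne' he hd hη' hMsub) hrest
  have hG := isBigO_d_mul_N_add_D he hd.isBigO hξ'.isBigO hη'.isBigO hR hS.isBigO hMsub hrest
  refine (isBigO_u2sol_mul_exp_sub φ he hD hd hG).trans
    ((inv_isBigO_abs_rpow_neg_inv three_ne_zero ht).congr_right fun t => ?_)
  norm_num
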